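/- Let B ⊂ A be an inclusion of simple unital C*-algebras with a conditional expectation of index-finite type. Then (B'∩A_2) e_2 = (B'∩A_1) e_2 and (B'∩A_2) e_1 = (A'∩A_2) e_1. -/

import Mathlib

open scoped TensorProduct

noncomputable section

/-- A unital C*-algebra is *simple* if it has no nontrivial closed two-sided ideals. -/
def IsSimpleCStarAlgebra (A : Type*) [Ring A] [TopologicalSpace A] : Prop :=
  ∀ I : TwoSidedIdeal A, IsClosed (I : Set A) → I = ⊥ ∨ I = ⊤

/-- A conditional expectation from the subalgebra `A` of the ambient algebra `C`
onto its subalgebra `B`, recorded as a linear map on `C`. -/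
structure CondExpOn (C : Type*) [CStarAlgebra C] (A B : StarSubalgebra ℂ C) where
  map : C →ₗ[ℂ] C
  mem_of_mem : ∀ x ∈ A, map x ∈ B
  fixes : ∀ x ∈ B, map x = x
  bimodule : ∀ b ∈ B, ∀ b' ∈ B, ∀ x ∈ A, map (b * x * b') = b * map x * b'
  star_map : ∀ x ∈ A, map (star x) = star (map x)
  positive : ∀ x ∈ A, ∃ y ∈ B, map (star x * x) = star y * y

/-- A (Watatani) quasi-basis for an expectation-like map `E` on the set `S`:
`∑ᵢ uᵢ E(uᵢ* y) = y = ∑ᵢ E(y uᵢ) uᵢ*` for all `y ∈ S`.  The existence of a quasi-basis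
is the statement that the corresponding conditional expectation is of index-finite type. -/
structure IsQuasiBasisOn {C : Type*} [CStarAlgebra C] (E : C →ₗ[ℂ] C) (S : Set C)
    {n : ℕ} (u : Fin n → C) : Prop where
  mem : ∀ i, u i ∈ S
  left : ∀ y ∈ S, ∑ i, u i * E (star (u i) * y) = y
  right : ∀ y ∈ S, ∑ i, E (y * u i) * star (u i) = y

/-- The relative commutant `M' ∩ N` inside the ambient algebra `C`. -/
def relativeCommutant {C : Type*} [CStarAlgebra C] (M N : StarSubalgebra ℂ C) :
    Submodule ℂ C where
  carrier := {x | x ∈ N ∧ ∀ m ∈ M, m * x = x * m}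
  add_mem' := fun hx hy => ⟨add_mem hx.1 hy.1,
    fun m hm => by rw [mul_add, add_mul, hx.2 m hm, hy.2 m hm]⟩
  zero_mem' := ⟨zero_mem _, fun m _ => by rw [mul_zero, zero_mul]⟩
  smul_mem' := fun c x hx => ⟨SMulMemClass.smul_mem c hx.1,
    fun m hm => by rw [mul_smul_comm, smul_mul_assoc, hx.2 m hm]⟩

/-- The pairing of two linear functionals against a tensor:
`pairT f g (a ⊗ b) = f a * g b`. -/
def pairT {C : Type*} [CStarAlgebra C] (f g : C →ₗ[ℂ] ℂ) : C ⊗[ℂ] C →ₗ[ℂ] ℂ :=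
  (TensorProduct.lid ℂ ℂ).toLinearMap ∘ₗ TensorProduct.map f g

/-- `(ε ⊗ id)` applied to a tensor. -/
def counitL {C : Type*} [CStarAlgebra C] (ε : C →ₗ[ℂ] ℂ) : C ⊗[ℂ] C →ₗ[ℂ] C :=
  (TensorProduct.lid ℂ C).toLinearMap ∘ₗ TensorProduct.map ε LinearMap.id

/-- `(id ⊗ ε)` applied to a tensor. -/
def counitR {C : Type*} [CStarAlgebra C] (ε : C →ₗ[ℂ] ℂ) : C ⊗[ℂ] C →ₗ[ℂ] C :=
  (TensorProduct.rid ℂ C).toLinearMap ∘ₗ TensorProduct.map LinearMap.id ε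

/-- Sweedler expression `t ↦ ε(t₍₁₎ w) t₍₂₎`; applied to `Δ(1)` this is the
target counital map `ε^t(w) = ε(1₍₁₎ w) 1₍₂₎`. -/
def ctarget {C : Type*} [CStarAlgebra C] (ε : C →ₗ[ℂ] ℂ) (w : C) : C ⊗[ℂ] C →ₗ[ℂ] C :=
  (TensorProduct.lid ℂ C).toLinearMap ∘ₗ
    TensorProduct.map (ε ∘ₗ LinearMap.mulRight ℂ w) LinearMap.id

/-- Sweedler expression `t ↦ t₍₁₎ ε(w t₍₂₎)`; applied to `Δ(1)` this is the
source counital map `ε^s(w) = 1₍₁₎ ε(w 1₍₂₎)`. -/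
def csource {C : Type*} [CStarAlgebra C] (ε : C →ₗ[ℂ] ℂ) (w : C) : C ⊗[ℂ] C →ₗ[ℂ] C :=
  (TensorProduct.rid ℂ C).toLinearMap ∘ₗ
    TensorProduct.map LinearMap.id (ε ∘ₗ LinearMap.mulLeft ℂ w)

/-- The tower `B ⊆ A ⊆ A₁ ⊆ A₂` of iterated C*-basic constructions associated to an
inclusion `B ⊆ A` of simple unital C*-algebras (all realized inside an ambient unital
C*-algebra `C`), together with:  the minimal conditional expectations `E₀ : A → B`,
`E₁ : A₁ → A`, `E₂ : A₂ → A₁`, all of index-finite type;  a quasi-basis `lam` for `E₀`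
with scalar index `τ⁻¹` (minimal, i.e. of smallest index);  the Jones projections
`e₁, e₂`;  the Markov-type trace `tr` given on `B' ∩ A₂` by `E₀ ∘ E₁ ∘ E₂`;  and a
quasi-basis `u` for the restriction of `E₁` to the relative commutant `A' ∩ A₁`, whose
Watatani index `k = ∑ uᵢuᵢ*` is invertible with inverse `kinv`. -/
structure JonesTower (C : Type*) [CStarAlgebra C] where
  B : StarSubalgebra ℂ C
  A : StarSubalgebra ℂ C
  A1 : StarSubalgebra ℂ C
  A2 : StarSubalgebra ℂ C
  hBA : B ≤ A
  hAA1 : A ≤ A1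
  hA1A2 : A1 ≤ A2
  simpleB : IsSimpleCStarAlgebra B
  simpleA : IsSimpleCStarAlgebra A
  E0 : CondExpOn C A B
  E1 : CondExpOn C A1 A
  E2 : CondExpOn C A2 A1
  τ : ℝ
  τ_pos : 0 < τ
  nl : ℕ
  lam : Fin nl → C
  lam_qb : IsQuasiBasisOn E0.map (A : Set C) lam
  qb1 : ∃ (n : ℕ) (v : Fin n → C), IsQuasiBasisOn E1.map (A1 : Set C) v
  qb2 : ∃ (n : ℕ) (v : Fin n → C), IsQuasiBasisOn E2.map (A2 : Set C) v
  lam_index : ∑ i, lam i * star (lam i) = ((τ⁻¹ : ℝ) : ℂ) • 1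
  E0_minimal : ∀ (E' : CondExpOn C A B) (n : ℕ) (v : Fin n → C) (c : ℝ),
      IsQuasiBasisOn E'.map (A : Set C) v →
      (∑ i, v i * star (v i)) = ((c : ℝ) : ℂ) • 1 → τ⁻¹ ≤ c
  e1 : C
  e2 : C
  e1_mem : e1 ∈ A1
  e2_mem : e2 ∈ A2
  e1_star : star e1 = e1
  e2_star : star e2 = e2
  e1_idem : e1 * e1 = e1
  e2_idem : e2 * e2 = e2
  e1_comm : ∀ b ∈ B, e1 * b = b * e1
  e2_comm : ∀ a ∈ A, e2 * a = a * e2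
  e1_jones : ∀ x ∈ A, e1 * x * e1 = E0.map x * e1
  e2_jones : ∀ x ∈ A1, e2 * x * e2 = E1.map x * e2
  E1_e1 : E1.map e1 = ((τ : ℝ) : ℂ) • 1
  E2_e2 : E2.map e2 = ((τ : ℝ) : ℂ) • 1
  gen1 : A1 = (StarAlgebra.adjoin ℂ ((A : Set C) ∪ {e1})).topologicalClosure
  gen2 : A2 = (StarAlgebra.adjoin ℂ ((A1 : Set C) ∪ {e2})).topologicalClosure
  tr : C →ₗ[ℂ] ℂ
  tr_def : ∀ x ∈ A2, (∀ b ∈ B, b * x = x * b) →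
      E0.map (E1.map (E2.map x)) = tr x • 1
  nu : ℕ
  u : Fin nu → C
  u_qb : IsQuasiBasisOn E1.map {x | x ∈ A1 ∧ ∀ a ∈ A, a * x = x * a} u
  kinv : C
  kinv_k : kinv * (∑ i, u i * star (u i)) = 1
  k_kinv : (∑ i, u i * star (u i)) * kinv = 1

namespace JonesTower

variable {C : Type*} [CStarAlgebra C] (T : JonesTower C)

/-- The relative commutant `P = B' ∩ A₁`. -/
def P : Submodule ℂ C := relativeCommutant T.B T.A1

/-- The relative commutant `Q = A' ∩ A₂`. -/
def Q : Submodule ℂ C := relativeCommutant T.A T.A2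

/-- `k = Ind_W (E₁|_{A' ∩ A₁}) = ∑ᵢ uᵢ uᵢ*`, the Watatani index of the restriction of
`E₁` to `A' ∩ A₁`. -/
def k : C := ∑ i, T.u i * star (T.u i)

/-- `d = ‖k‖₂ = tr(k* k)^{1/2}`. -/
def d : ℝ := Real.sqrt (T.tr (star T.k * T.k)).re

/-- The Nikshych–Vainerman pairing `⟨x, w⟩ = d τ⁻² tr(x e₂ e₁ w)`. -/
def pairNV (x w : C) : ℂ :=
  (T.d : ℂ) * ((T.τ : ℂ)⁻¹) ^ 2 * T.tr (x * T.e2 * T.e1 * w)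

/-- The NV pairing as a linear functional in its second variable. -/
def pairL (x : C) : C →ₗ[ℂ] ℂ :=
  ((T.d : ℂ) * ((T.τ : ℂ)⁻¹) ^ 2) • (T.tr ∘ₗ LinearMap.mulLeft ℂ (x * T.e2 * T.e1))

/-- The NV pairing as a linear functional in its first variable. -/
def pairR (w : C) : C →ₗ[ℂ] ℂ :=
  ((T.d : ℂ) * ((T.τ : ℂ)⁻¹) ^ 2) • (T.tr ∘ₗ LinearMap.mulRight ℂ (T.e2 * (T.e1 * w)))

/-- The subspace `Q ⊗ Q` of `C ⊗ C`. -/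
def QQ : Submodule ℂ (C ⊗[ℂ] C) :=
  Submodule.span ℂ {t | ∃ a ∈ T.Q, ∃ b ∈ T.Q, t = a ⊗ₜ[ℂ] b}

/-- The subspace `P ⊗ P` of `C ⊗ C`. -/
def PP : Submodule ℂ (C ⊗[ℂ] C) :=
  Submodule.span ℂ {t | ∃ a ∈ T.P, ∃ b ∈ T.P, t = a ⊗ₜ[ℂ] b}

/-- The reflection operator `r⁻₁(w) = τ⁻² ∑ᵢ λᵢ e₁ e₂ E₂(w e₁ e₂ λᵢ*)`. -/
def rminus (w : C) : C :=
  (((T.τ : ℂ)⁻¹) ^ 2) •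
    ∑ i, T.lam i * T.e1 * T.e2 * T.E2.map (w * T.e1 * T.e2 * star (T.lam i))

/-- The reflection operator `r⁺₁(x) = τ⁻¹ ∑ᵢ E₁(e₁ λᵢ x) e₁ λᵢ*`. -/
def rplus (x : C) : C :=
  ((T.τ : ℂ)⁻¹) • ∑ i, T.E1.map (T.e1 * T.lam i * x) * T.e1 * star (T.lam i)

/-- The inclusion `B ⊆ A` has depth 2: `(B' ∩ A₁) e₂ (B' ∩ A₁) = B' ∩ A₂`
(as linear spans). -/
def DepthTwo : Prop :=
  Submodule.span ℂ {z | ∃ x ∈ T.P, ∃ y ∈ T.P, z = x * T.e2 * y} =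
    relativeCommutant T.B T.A2

/-- The comultiplication, counit and antipode on `Q = A' ∩ A₂` determined by the
Nikshych–Vainerman pairing:  `⟨x₁x₂, w⟩ = ⟨x₁, w₍₁₎⟩⟨x₂, w₍₂₎⟩`,  `ε(w) = ⟨1, w⟩`, and
`⟨x, S(w)⟩ = conj ⟨x*, w*⟩`. -/
structure NVData where
  Δ : C →ₗ[ℂ] C ⊗[ℂ] C
  ε : C →ₗ[ℂ] ℂ
  S : C →ₗ[ℂ] C
  Δ_mem : ∀ w ∈ T.Q, Δ w ∈ T.QQ
  S_mem : ∀ w ∈ T.Q, S w ∈ T.Q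
  Δ_pair : ∀ x₁ ∈ T.P, ∀ x₂ ∈ T.P, ∀ w ∈ T.Q,
      T.pairNV (x₁ * x₂) w = pairT (T.pairL x₁) (T.pairL x₂) (Δ w)
  ε_pair : ∀ w ∈ T.Q, ε w = T.pairNV 1 w
  S_pair : ∀ x ∈ T.P, ∀ w ∈ T.Q,
      T.pairNV x (S w) = starRingEnd ℂ (T.pairNV (star x) (star w))

variable {T}

/-- The deformed comultiplication `Δ̃(w) = d (1 ⊗ k⁻¹) Δ(w)`. -/
def tΔ (D : T.NVData) : C →ₗ[ℂ] C ⊗[ℂ] C :=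
  (T.d : ℂ) • ((LinearMap.mulLeft ℂ ((1 : C) ⊗ₜ[ℂ] T.kinv)) ∘ₗ D.Δ)

/-- The deformed counit `ε̃(w) = d⁻¹ ε(k w)`. -/
def tε (D : T.NVData) : C →ₗ[ℂ] ℂ :=
  ((T.d : ℂ))⁻¹ • (D.ε ∘ₗ LinearMap.mulLeft ℂ T.k)

/-- The deformed antipode `S̃(w) = S(k w k⁻¹)`. -/
def tS (D : T.NVData) : C →ₗ[ℂ] C :=
  D.S ∘ₗ (LinearMap.mulRight ℂ T.kinv ∘ₗ LinearMap.mulLeft ℂ T.k)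

end JonesTower

/-- `(Q, Δ, ε, S)` is a weak C*-Hopf algebra, where `Q` is a (necessarily
finite-dimensional) subspace of the ambient C*-algebra `C`, `dag` is the involution of
`Q` and `dagT` is the induced componentwise involution of `Q ⊗ Q`.  This records:
`Q` is a unital algebra, `dag` is an (isometrically positive-definite, i.e. C*-)
involution, `Δ` is a `dag`-preserving algebra map, `(Q, Δ, ε)` is a coalgebra,
the weak bialgebra axioms for `ε` and `Δ(1)`, and the antipode axioms for `S`. -/
structure IsWeakCStarHopfOn {C : Type*} [CStarAlgebra C]
    (Qc : Submodule ℂ C) (QQc : Submodule ℂ (C ⊗[ℂ] C))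
    (dag : C →ₛₗ[starRingEnd ℂ] C) (dagT : C ⊗[ℂ] C → C ⊗[ℂ] C)
    (Δ : C →ₗ[ℂ] C ⊗[ℂ] C) (ε : C →ₗ[ℂ] ℂ) (S : C →ₗ[ℂ] C) : Prop where
  one_mem : (1 : C) ∈ Qc
  mul_mem : ∀ w ∈ Qc, ∀ w' ∈ Qc, w * w' ∈ Qc
  findim : FiniteDimensional ℂ Qc
  dag_mem : ∀ w ∈ Qc, dag w ∈ Qc
  dag_invol : ∀ w ∈ Qc, dag (dag w) = w
  dag_mul : ∀ w ∈ Qc, ∀ w' ∈ Qc, dag (w * w') = dag w' * dag w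
  dag_cstar : ∀ w ∈ Qc, dag w * w = 0 → w = 0
  Δ_mem : ∀ w ∈ Qc, Δ w ∈ QQc
  S_mem : ∀ w ∈ Qc, S w ∈ Qc
  Δ_mul : ∀ w ∈ Qc, ∀ w' ∈ Qc, Δ (w * w') = Δ w * Δ w'
  Δ_star : ∀ w ∈ Qc, Δ (dag w) = dagT (Δ w)
  coassoc : ∀ w ∈ Qc,
      (TensorProduct.assoc ℂ C C C) ((TensorProduct.map Δ LinearMap.id) (Δ w))
        = (TensorProduct.map LinearMap.id Δ) (Δ w)
  counit_left : ∀ w ∈ Qc, counitL ε (Δ w) = w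
  counit_right : ∀ w ∈ Qc, counitR ε (Δ w) = w
  eps_weak : ∀ w ∈ Qc, ∀ w' ∈ Qc, ∀ w'' ∈ Qc,
      ε (w * w' * w'') =
        pairT (ε ∘ₗ LinearMap.mulLeft ℂ w) (ε ∘ₗ LinearMap.mulRight ℂ w'') (Δ w')
  eps_weak' : ∀ w ∈ Qc, ∀ w' ∈ Qc, ∀ w'' ∈ Qc,
      ε (w * w' * w'') =
        pairT (ε ∘ₗ LinearMap.mulRight ℂ w'') (ε ∘ₗ LinearMap.mulLeft ℂ w) (Δ w')
  delta_one_left :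
      (TensorProduct.assoc ℂ C C C).symm ((TensorProduct.map LinearMap.id Δ) (Δ 1))
        = ((Δ 1) ⊗ₜ[ℂ] (1 : C)) *
            ((TensorProduct.assoc ℂ C C C).symm ((1 : C) ⊗ₜ[ℂ] (Δ 1)))
  delta_one_right :
      (TensorProduct.assoc ℂ C C C).symm ((TensorProduct.map LinearMap.id Δ) (Δ 1))
        = ((TensorProduct.assoc ℂ C C C).symm ((1 : C) ⊗ₜ[ℂ] (Δ 1))) *
            ((Δ 1) ⊗ₜ[ℂ] (1 : C))
  antipode_left : ∀ w ∈ Qc,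
      LinearMap.mul' ℂ C ((TensorProduct.map LinearMap.id S) (Δ w)) = ctarget ε w (Δ 1)
  antipode_right : ∀ w ∈ Qc,
      LinearMap.mul' ℂ C ((TensorProduct.map S LinearMap.id) (Δ w)) = csource ε w (Δ 1)
  antipode_mid : ∀ w ∈ Qc,
      LinearMap.mul' ℂ C
        ((TensorProduct.map (LinearMap.mul' ℂ C ∘ₗ TensorProduct.map S LinearMap.id) S)
          ((TensorProduct.map Δ LinearMap.id) (Δ w))) = S w

/-- A left action of a weak C*-Hopf algebra `(Hc, Δ, ε, S, dag)` (realized inside the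
ambient algebra `C`) on the C*-subalgebra `Ac`, given as a bilinear map `act`. -/
structure IsWeakHopfActionOn {C : Type*} [CStarAlgebra C]
    (Hc : Submodule ℂ C) (Ac : StarSubalgebra ℂ C)
    (Δ : C →ₗ[ℂ] C ⊗[ℂ] C) (ε : C →ₗ[ℂ] ℂ) (S : C →ₗ[ℂ] C) (dag : C → C)
    (act : C →ₗ[ℂ] C →ₗ[ℂ] C) : Prop where
  act_mem : ∀ y ∈ Hc, ∀ a ∈ Ac, act y a ∈ Ac
  one_act : ∀ a ∈ Ac, act 1 a = a
  mul_act : ∀ y ∈ Hc, ∀ y' ∈ Hc, ∀ a ∈ Ac, act (y * y') a = act y (act y' a)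
  leibniz : ∀ y ∈ Hc, ∀ a ∈ Ac, ∀ a' ∈ Ac,
      act y (a * a') =
        LinearMap.mul' ℂ C ((TensorProduct.map (act.flip a) (act.flip a')) (Δ y))
  star_act : ∀ y ∈ Hc, ∀ a ∈ Ac, star (act y a) = act (dag (S y)) (star a)
  unit_act : ∀ y ∈ Hc, act y 1 = act (ctarget ε y (Δ 1)) 1
  unit_act_zero : ∀ y ∈ Hc, (act y 1 = 0 ↔ ctarget ε y (Δ 1) = 0)
/-- The conjugate-linear involution `w ↦ gi (star w) g` of `C` (for `gi = g⁻¹` this is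
the involution `w† = g⁻¹ w* g`). -/
def conjStar {C : Type*} [CStarAlgebra C] (g gi : C) : C →ₛₗ[starRingEnd ℂ] C where
  toFun w := gi * star w * g
  map_add' w w' := by rw [star_add, mul_add, add_mul]
  map_smul' c w := by
    simp only [star_smul, mul_smul_comm, smul_mul_assoc, starRingEnd_apply]

/-- The map `(x, a) ↦ x₍₁₎ a S(x₍₂₎)`, as a bilinear map, built from a comultiplication
`Δ` and an antipode `S`. -/
def hopfAct {C : Type*} [CStarAlgebra C] (Δ : C →ₗ[ℂ] C ⊗[ℂ] C) (S : C →ₗ[ℂ] C) :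
    C →ₗ[ℂ] C →ₗ[ℂ] C :=
  LinearMap.mk₂ ℂ
    (fun x a =>
      LinearMap.mul' ℂ C ((TensorProduct.map ((LinearMap.mul ℂ C).flip a) S) (Δ x)))
    (fun x x' a => by simp)
    (fun c x a => by simp)
    (fun x a a' => by simp [TensorProduct.map_add_left])
    (fun c x a => by simp [TensorProduct.map_smul_left])

namespace JonesTower

variable {C : Type*} [CStarAlgebra C]

/-- The action `w ▷ x = τ⁻¹ E₂(w x e₂)` of `Q = A' ∩ A₂` on `A₁`, as a bilinear map. -/
def qact (T : JonesTower C) : C →ₗ[ℂ] C →ₗ[ℂ] C :=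
  LinearMap.mk₂ ℂ (fun w x => (T.τ : ℂ)⁻¹ • T.E2.map (w * x * T.e2))
    (fun w w' x => by rw [add_mul, add_mul, map_add, smul_add])
    (fun c w x => by rw [smul_mul_assoc, smul_mul_assoc, map_smul, smul_comm])
    (fun w x x' => by rw [mul_add, add_mul, map_add, smul_add])
    (fun c w x => by rw [mul_smul_comm, smul_mul_assoc, map_smul, smul_comm])

/-- The weak C*-Hopf algebra structure `(Δ_P, ε_P, S_P)` on `P = B' ∩ A₁` which is dual,
via the Nikshych–Vainerman pairing, to the deformed weak C*-Hopf algebra structure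
`(Q, Δ̃, ε̃, S̃)`:  the multiplication of `P` is dual to `Δ̃`, the comultiplication of `P`
is dual to the multiplication of `Q`, the counit of `P` is evaluation against `1 ∈ Q`,
the unit of `P` pairs as `ε̃`, and the antipode of `P` is dual to `S̃`. -/
structure DualData (T : JonesTower C) (D : T.NVData) where
  ΔP : C →ₗ[ℂ] C ⊗[ℂ] C
  εP : C →ₗ[ℂ] ℂ
  SP : C →ₗ[ℂ] C
  ΔP_mem : ∀ x ∈ T.P, ΔP x ∈ T.PP
  SP_mem : ∀ x ∈ T.P, SP x ∈ T.P
  mul_dual : ∀ x ∈ T.P, ∀ x' ∈ T.P, ∀ w ∈ T.Q,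
      T.pairNV (x * x') w = pairT (T.pairL x) (T.pairL x') (tΔ D w)
  ΔP_dual : ∀ x ∈ T.P, ∀ w ∈ T.Q, ∀ w' ∈ T.Q,
      pairT (T.pairR w) (T.pairR w') (ΔP x) = T.pairNV x (w * w')
  εP_dual : ∀ x ∈ T.P, εP x = T.pairNV x 1
  one_dual : ∀ w ∈ T.Q, T.pairNV 1 w = tε D w
  SP_dual : ∀ x ∈ T.P, ∀ w ∈ T.Q, T.pairNV (SP x) w = T.pairNV x (tS D w)

end JonesTower

/-!
For `x ∈ B' ∩ A₂` put `y = τ⁻¹ E₂(x e₂) ∈ B' ∩ A₁`. The pull-down identity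
`E₂(x e₂) e₂ = τ x e₂` gives `y e₂ = x e₂`; it holds on the *-algebra generated by `A₁`
and `e₂`, where `x e₂ ∈ A₁ e₂`, and extends to its closure `A₂` because the positive map
`E₂` is continuous.

For the second equality put `w = ∑ᵢ λᵢ x e₁ λᵢ*`. Since `x e₁` commutes with `B`, expanding
`a λᵢ` and `λⱼ* a` in the quasi-basis shows that `w` commutes with every `a ∈ A`, and
`e₁ λᵢ* e₁ = E₀(λᵢ*) e₁` together with `∑ᵢ λᵢ E₀(λᵢ*) = 1` gives `w e₁ = x e₁`.
-/
lemma image_eq_image_of_subset_of_forall_exists {α β : Type*} {f : α → β} {s t : Set α}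
    (hts : t ⊆ s) (h : ∀ x ∈ s, ∃ y ∈ t, f y = f x) : f '' s = f '' t := by
  refine (Set.image_mono hts).antisymm' ?_
  rintro _ ⟨x, hx, rfl⟩
  obtain ⟨y, hy, hxy⟩ := h x hx
  exact ⟨y, hy, hxy⟩

section RelativeCommutant

variable {C : Type*} [CStarAlgebra C] {M M' N N' : StarSubalgebra ℂ C}

lemma relativeCommutant_mono (hM : M' ≤ M) (hN : N ≤ N') :
    relativeCommutant M N ≤ relativeCommutant M' N' :=
  fun _ hx => ⟨hN hx.1, fun m hm => hx.2 m (hM hm)⟩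

lemma mul_mem_relativeCommutant {x y : C} (hx : x ∈ relativeCommutant M N)
    (hy : y ∈ relativeCommutant M N) : x * y ∈ relativeCommutant M N :=
  ⟨mul_mem hx.1 hy.1, fun m hm => by
    rw [← mul_assoc, hx.2 m hm, mul_assoc, hy.2 m hm, mul_assoc]⟩

end RelativeCommutant

namespace CondExpOn

variable {C : Type*} [CStarAlgebra C] {A B : StarSubalgebra ℂ C} (E : CondExpOn C A B)

lemma map_mul_left {b x : C} (hb : b ∈ B) (hx : x ∈ A) : E.map (b * x) = b * E.map x := by
  simpa using E.bimodule b hb 1 (one_mem B) x hx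

lemma map_mul_right {b x : C} (hb : b ∈ B) (hx : x ∈ A) : E.map (x * b) = E.map x * b := by
  simpa using E.bimodule 1 (one_mem B) b hb x hx

lemma map_mem_relativeCommutant {M : StarSubalgebra ℂ C} (hMB : M ≤ B) {x : C}
    (hx : x ∈ relativeCommutant M A) : E.map x ∈ relativeCommutant M B :=
  ⟨E.mem_of_mem x hx.1, fun m hm => by
    rw [← E.map_mul_left (hMB hm) hx.1, hx.2 m hm, E.map_mul_right (hMB hm) hx.1]⟩

lemma continuousOn_map [IsClosed (A : Set C)] (hBA : B ≤ A) : ContinuousOn E.map A := by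
  let _ : PartialOrder A := CStarAlgebra.spectralOrder A
  have _ : StarOrderedRing A := CStarAlgebra.spectralOrderedRing A
  let F : A →ₗ[ℂ] A :=
    { toFun x := ⟨E.map x, hBA (E.mem_of_mem x x.2)⟩
      map_add' x y := Subtype.ext (by simp)
      map_smul' c x := Subtype.ext (by simp) }
  let Fpos : A →ₚ[ℂ] A := PositiveLinearMap.mk₀ F fun x hx => by
    obtain ⟨y, rfl⟩ := CStarAlgebra.nonneg_iff_eq_star_mul_self.mp hx
    obtain ⟨z, hz, hEz⟩ := E.positive y y.2
    exact CStarAlgebra.nonneg_iff_eq_star_mul_self.mpr ⟨⟨z, hBA hz⟩, Subtype.ext hEz⟩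
  rw [continuousOn_iff_continuous_domRestrict]
  exact continuous_subtype_val.comp (map_continuous Fpos)

end CondExpOn

namespace IsQuasiBasisOn

variable {C : Type*} [CStarAlgebra C] {A : StarSubalgebra ℂ C} {B : Set C} {E : C →ₗ[ℂ] C}
  {n : ℕ} {v : Fin n → C}

lemma sum_mul_mul_star_comm (hv : IsQuasiBasisOn E A v) (hE : ∀ x ∈ A, E x ∈ B) {y : C}
    (hy : ∀ b ∈ B, b * y = y * b) {a : C} (ha : a ∈ A) :
    a * ∑ i, v i * y * star (v i) = (∑ i, v i * y * star (v i)) * a := by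
  have hvA (i) : v i ∈ A := hv.mem i
  have hb (i j) : E (star (v j) * a * v i) ∈ B :=
    hE _ (mul_mem (mul_mem (star_mem (hvA j)) ha) (hvA i))
  calc a * ∑ i, v i * y * star (v i)
      = ∑ i, ∑ j, v j * E (star (v j) * a * v i) * y * star (v i) := by
        simp_rw [Finset.mul_sum, ← Finset.sum_mul, ← mul_assoc, mul_assoc (star _) a,
          hv.left _ (mul_mem ha (hvA _))]
    _ = ∑ j, ∑ i, v j * y * E (star (v j) * a * v i) * star (v i) := by
        rw [Finset.sum_comm]
        refine Finset.sum_congr rfl fun j _ => Finset.sum_congr rfl fun i _ => ?_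
        rw [mul_assoc (v j), hy _ (hb i j), ← mul_assoc]
    _ = (∑ j, v j * y * star (v j)) * a := by
        rw [Finset.sum_mul]
        refine Finset.sum_congr rfl fun j _ => ?_
        conv_rhs => rw [mul_assoc _ (star (v j)), ← hv.right _ (mul_mem (star_mem (hvA j)) ha),
          Finset.mul_sum]
        simp_rw [mul_assoc]

end IsQuasiBasisOn

namespace JonesTower

variable {C : Type*} [CStarAlgebra C] (T : JonesTower C)

def stabA1e2 : Subalgebra ℂ C where
  carrier := {z | ∀ m ∈ T.A1, ∃ a ∈ T.A1, z * (m * T.e2) = a * T.e2}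
  mul_mem' {z z'} hz hz' m hm := by
    obtain ⟨a, ha, hz'm⟩ := hz' m hm
    obtain ⟨a', ha', hza⟩ := hz a ha
    exact ⟨a', ha', by rw [mul_assoc, hz'm, hza]⟩
  add_mem' {z z'} hz hz' m hm := by
    obtain ⟨a, ha, hzm⟩ := hz m hm
    obtain ⟨a', ha', hz'm⟩ := hz' m hm
    exact ⟨a + a', add_mem ha ha', by rw [add_mul, hzm, hz'm, add_mul]⟩
  algebraMap_mem' r m hm :=
    ⟨r • m, SMulMemClass.smul_mem r hm, by
      rw [Algebra.algebraMap_eq_smul_one, smul_mul_assoc, one_mul, smul_mul_assoc]⟩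

lemma A1_le_stabA1e2 : T.A1.toSubalgebra ≤ T.stabA1e2 :=
  fun z hz m hm => ⟨z * m, mul_mem hz hm, (mul_assoc z m T.e2).symm⟩

lemma e2_mem_stabA1e2 : T.e2 ∈ T.stabA1e2 := fun m hm =>
  ⟨T.E1.map m, T.hAA1 (T.E1.mem_of_mem m hm), by rw [← mul_assoc, T.e2_jones m hm]⟩

lemma adjoin_le_stabA1e2 :
    (StarAlgebra.adjoin ℂ ((T.A1 : Set C) ∪ {T.e2})).toSubalgebra ≤ T.stabA1e2 := by
  rw [StarAlgebra.adjoin_toSubalgebra, Algebra.adjoin_le_iff]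
  have h : ∀ z ∈ (T.A1 : Set C) ∪ {T.e2}, z ∈ T.stabA1e2 := by
    rintro z (hz | rfl)
    exacts [T.A1_le_stabA1e2 hz, T.e2_mem_stabA1e2]
  rintro z (hz | (hz | hz))
  · exact h z hz
  · exact h z (Or.inl (by simpa using star_mem hz))
  · exact h z (Or.inr (by simpa [T.e2_star] using congrArg star (Set.mem_singleton_iff.mp hz)))

lemma E2_mul_e2 {a : C} (ha : a ∈ T.A1) : T.E2.map (a * T.e2) = (T.τ : ℂ) • a := by
  rw [T.E2.map_mul_left ha T.e2_mem, T.E2_e2, mul_smul_comm, mul_one]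

lemma isClosed_A2 : IsClosed (T.A2 : Set C) := by
  rw [T.gen2]
  exact StarSubalgebra.isClosed_topologicalClosure _

lemma E2_mul_e2_mul_e2 {x : C} (hx : x ∈ T.A2) :
    T.E2.map (x * T.e2) * T.e2 = (T.τ : ℂ) • (x * T.e2) := by
  have := T.isClosed_A2
  set D := StarAlgebra.adjoin ℂ ((T.A1 : Set C) ∪ {T.e2})
  have hD : Set.EqOn (fun x => T.E2.map (x * T.e2) * T.e2)
      (fun x => (T.τ : ℂ) • (x * T.e2)) D := by
    intro z hz
    obtain ⟨a, ha, hza⟩ := T.adjoin_le_stabA1e2 hz 1 (one_mem _)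
    simp only [one_mul] at hza
    simp only [hza, T.E2_mul_e2 ha, smul_mul_assoc]
  have hcont : ContinuousOn (fun x => T.E2.map (x * T.e2) * T.e2) T.A2 :=
    ((T.E2.continuousOn_map T.hA1A2).comp (continuous_mul_const T.e2).continuousOn
      fun x hx => mul_mem hx T.e2_mem).mul continuousOn_const
  refine hD.of_subset_closure hcont (by fun_prop) ?_ ?_ hx
  · rw [T.gen2]; exact StarSubalgebra.le_topologicalClosure _
  · rw [T.gen2, StarSubalgebra.topologicalClosure_coe]

lemma exists_mem_P_mul_e2_eq {x : C} (hx : x ∈ relativeCommutant T.B T.A2) :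
    ∃ y ∈ T.P, y * T.e2 = x * T.e2 := by
  have he2 : T.e2 ∈ relativeCommutant T.B T.A2 :=
    ⟨T.e2_mem, fun b hb => (T.e2_comm b (T.hBA hb)).symm⟩
  refine ⟨(T.τ : ℂ)⁻¹ • T.E2.map (x * T.e2),
    (T.P).smul_mem _ (T.E2.map_mem_relativeCommutant (T.hBA.trans T.hAA1)
      (mul_mem_relativeCommutant hx he2)), ?_⟩
  have hτ : (T.τ : ℂ) ≠ 0 := by exact_mod_cast T.τ_pos.ne'
  rw [smul_mul_assoc, T.E2_mul_e2_mul_e2 hx.1, inv_smul_smul₀ hτ]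

lemma sum_lam_mul_star_mul_e1 {x : C} (hx : ∀ b ∈ T.B, b * x = x * b) :
    (∑ i, T.lam i * (x * T.e1) * star (T.lam i)) * T.e1 = x * T.e1 := by
  have hlam (i) : star (T.lam i) ∈ T.A := star_mem (T.lam_qb.mem i)
  calc (∑ i, T.lam i * (x * T.e1) * star (T.lam i)) * T.e1
      = ∑ i, T.lam i * (x * (T.e1 * star (T.lam i) * T.e1)) := by
        simp only [Finset.sum_mul, mul_assoc]
    _ = ∑ i, T.lam i * T.E0.map (star (T.lam i) * 1) * (x * T.e1) := by
        refine Finset.sum_congr rfl fun i _ => ?_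
        rw [T.e1_jones _ (hlam i), ← mul_assoc x, ← hx _ (T.E0.mem_of_mem _ (hlam i)), mul_one]
        simp only [mul_assoc]
    _ = x * T.e1 := by rw [← Finset.sum_mul, T.lam_qb.left 1 (one_mem _), one_mul]

lemma exists_mem_Q_mul_e1_eq {x : C} (hx : x ∈ relativeCommutant T.B T.A2) :
    ∃ w ∈ T.Q, w * T.e1 = x * T.e1 := by
  have hxe1 : x * T.e1 ∈ relativeCommutant T.B T.A2 :=
    mul_mem_relativeCommutant hx ⟨T.hA1A2 T.e1_mem, fun b hb => (T.e1_comm b hb).symm⟩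
  have hA : T.A ≤ T.A2 := T.hAA1.trans T.hA1A2
  refine ⟨∑ i, T.lam i * (x * T.e1) * star (T.lam i), ⟨?_, fun a ha => ?_⟩,
    T.sum_lam_mul_star_mul_e1 hx.2⟩
  · exact sum_mem fun i _ => mul_mem (mul_mem (hA (T.lam_qb.mem i)) hxe1.1)
      (hA (star_mem (T.lam_qb.mem i)))
  · exact T.lam_qb.sum_mul_mul_star_comm T.E0.mem_of_mem hxe1.2 ha

end JonesTower

/-- Let `B ⊂ A` be an inclusion of simple unital C*-algebras with a
conditional expectation of index-finite type.  Then `(B' ∩ A₂) e₂ = (B' ∩ A₁) e₂` and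
`(B' ∩ A₂) e₁ = (A' ∩ A₂) e₁`. -/
theorem statement_8 {C : Type*} [CStarAlgebra C] (T : JonesTower C) :
    (fun x => x * T.e2) '' (relativeCommutant T.B T.A2 : Set C)
        = (fun x => x * T.e2) '' (T.P : Set C)
    ∧ (fun x => x * T.e1) '' (relativeCommutant T.B T.A2 : Set C)
        = (fun x => x * T.e1) '' (T.Q : Set C) :=
  ⟨image_eq_image_of_subset_of_forall_exists (relativeCommutant_mono le_rfl T.hA1A2)
      fun _ => T.exists_mem_P_mul_e2_eq,
    image_eq_image_of_subset_of_forall_exists (relativeCommutant_mono T.hBA le_rfl)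
      fun _ => T.exists_mem_Q_mul_e1_eq⟩
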